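/- Let 0 < u < v and let p_σ²(x) := (2πσ²)^{−1/2} exp(−x²/(2σ²)) denote the density of the centred Gaussian measure with variance σ². Then the total variation distance between N(0,u) and N(0,v) satisfies ∫_ℝ |p_u(x) − p_v(x)| dx ≤ √(2/π) · (v − u)/u. -/

import Mathlib

open MeasureTheory Real

noncomputable section

/-- Density of the centred Gaussian measure on `ℝ` with variance `s`. -/
def gaussDensity (s x : ℝ) : ℝ :=
  (Real.sqrt (2 * Real.pi * s))⁻¹ * Real.exp (-(x ^ 2) / (2 * s))

lemma key_poly (t : ℝ) (ht : 0 ≤ t) : |t - 1| ≤ Real.exp (3 * t / 10) := by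
  rcases le_total t 1 with h | h
  · rw [abs_of_nonpos (by linarith)]
    have : (1:ℝ) ≤ Real.exp (3 * t / 10) := by
      rw [Real.one_le_exp_iff]; positivity
    linarith
  · rw [abs_of_nonneg (by linarith)]
    have hx : (0:ℝ) ≤ 3 * t / 10 := by positivity
    have hsum := Real.sum_le_exp_of_nonneg hx 5
    have hexp : 1 + 3*t/10 + (3*t/10)^2/2 + (3*t/10)^3/6 + (3*t/10)^4/24 ≤ Real.exp (3*t/10) := by
      refine le_trans (le_of_eq ?_) hsum
      norm_num [Finset.sum_range_succ, Nat.factorial]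
    nlinarith [sq_nonneg (t - 4), sq_nonneg (t-5), sq_nonneg ((t-4)*(t-5)), sq_nonneg (t*(t-4))]

lemma hasDerivAt_gaussDensity (x s : ℝ) (hs : 0 < s) :
    HasDerivAt (fun s => gaussDensity s x)
      (gaussDensity s x * ((x ^ 2 - s) / (2 * s ^ 2))) s := by
  have h2πs : 0 < 2 * Real.pi * s := by positivity
  have hsqp : 0 < Real.sqrt (2 * Real.pi * s) := Real.sqrt_pos.2 h2πs
  have hlin : HasDerivAt (fun s : ℝ => 2 * Real.pi * s) (2 * Real.pi) s := by
    simpa using (hasDerivAt_id s).const_mul (2 * Real.pi)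
  have hsqrt : HasDerivAt (fun s : ℝ => Real.sqrt (2 * Real.pi * s))
      (1 / (2 * Real.sqrt (2 * Real.pi * s)) * (2 * Real.pi)) s :=
    (Real.hasDerivAt_sqrt h2πs.ne').comp s hlin
  have hinv : HasDerivAt (fun s : ℝ => (Real.sqrt (2 * Real.pi * s))⁻¹)
      (-(1 / (2 * Real.sqrt (2 * Real.pi * s)) * (2 * Real.pi)) / (Real.sqrt (2 * Real.pi * s)) ^ 2) s :=
    hsqrt.inv hsqp.ne'
  have hden : HasDerivAt (fun s : ℝ => 2 * s) 2 s := by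
    simpa using (hasDerivAt_id s).const_mul (2:ℝ)
  have hquot : HasDerivAt (fun s : ℝ => -(x ^ 2) / (2 * s))
      ((0 * (2 * s) - (-(x ^ 2)) * 2) / (2 * s) ^ 2) s :=
    (hasDerivAt_const s (-(x ^ 2))).div hden (by positivity)
  have hexp := hquot.exp
  have := hinv.mul hexp
  convert (show HasDerivAt (fun s => gaussDensity s x) _ s from this) using 1
  have hss : Real.sqrt (2 * Real.pi * s) ^ 2 = 2 * Real.pi * s := Real.sq_sqrt h2πs.le
  simp only [gaussDensity]
  generalize hA : Real.sqrt (2 * Real.pi * s) = A at *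
  have hπ : 2 * Real.pi = A ^ 2 / s := by field_simp [hss]; exact hss.symm
  rw [hπ]
  field_simp
  ring

lemma deriv_bound (x u v s : ℝ) (hu : 0 < u) (hsu : u ≤ s) (hsv : s ≤ v) :
    |gaussDensity s x * ((x ^ 2 - s) / (2 * s ^ 2))|
      ≤ v * (2 * u ^ 2 * Real.sqrt (2 * Real.pi * u))⁻¹ * Real.exp (-(x ^ 2) / (5 * v)) := by
  have hs : 0 < s := lt_of_lt_of_le hu hsu
  have hv : 0 < v := lt_of_lt_of_le hs hsv
  have h1 : |x ^ 2 - s| * Real.exp (-(x ^ 2) / (2 * s)) ≤ v * Real.exp (-(x ^ 2) / (5 * v)) := by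
    have hk := key_poly (x ^ 2 / s) (by positivity)
    have he : |x ^ 2 - s| = s * |x ^ 2 / s - 1| := by
      nth_rewrite 2 [← abs_of_pos hs]
      rw [← abs_mul]
      congr 1
      field_simp
    have harg : -(x ^ 2) / (5 * s) ≤ -(x ^ 2) / (5 * v) := by
      rw [neg_div, neg_div, neg_le_neg_iff]
      gcongr
    calc |x ^ 2 - s| * Real.exp (-(x ^ 2) / (2 * s))
        = s * (|x ^ 2 / s - 1| * Real.exp (-(x ^ 2) / (2 * s))) := by rw [he]; ring
      _ ≤ s * (Real.exp (3 * (x ^ 2 / s) / 10) * Real.exp (-(x ^ 2) / (2 * s))) := by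
          gcongr
      _ = s * Real.exp (-(x ^ 2) / (5 * s)) := by
          rw [← Real.exp_add]; congr 1; field_simp; ring
      _ ≤ v * Real.exp (-(x ^ 2) / (5 * v)) :=
          mul_le_mul hsv (Real.exp_le_exp.2 harg) (Real.exp_pos _).le hv.le
  have h2 : (2 * s ^ 2 * Real.sqrt (2 * Real.pi * s))⁻¹
      ≤ (2 * u ^ 2 * Real.sqrt (2 * Real.pi * u))⁻¹ := by
    apply inv_anti₀ (by positivity)
    gcongr
  calc |gaussDensity s x * ((x ^ 2 - s) / (2 * s ^ 2))|
      = (|x ^ 2 - s| * Real.exp (-(x ^ 2) / (2 * s))) * (2 * s ^ 2 * Real.sqrt (2 * Real.pi * s))⁻¹ := by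
        unfold gaussDensity
        rw [abs_mul, abs_mul, abs_div, abs_of_nonneg (inv_nonneg.2 (Real.sqrt_nonneg _)),
          abs_of_pos (Real.exp_pos _), abs_of_pos (show (0:ℝ) < 2 * s ^ 2 by positivity), mul_inv]
        ring
    _ ≤ (v * Real.exp (-(x ^ 2) / (5 * v))) * (2 * u ^ 2 * Real.sqrt (2 * Real.pi * u))⁻¹ :=
        mul_le_mul h1 h2 (by positivity) (by positivity)
    _ = v * (2 * u ^ 2 * Real.sqrt (2 * Real.pi * u))⁻¹ * Real.exp (-(x ^ 2) / (5 * v)) := by ring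

lemma base_case (u v : ℝ) (hu : 0 < u) (huv : u < v)
    (hc : 5 * Real.pi * v ^ 3 ≤ 16 * u ^ 3) :
    (∫ x : ℝ, |gaussDensity u x - gaussDensity v x|)
      ≤ Real.sqrt (2 / Real.pi) * ((v - u) / u) := by
  have hv : 0 < v := hu.trans huv
  set K : ℝ := v * (2 * u ^ 2 * Real.sqrt (2 * Real.pi * u))⁻¹ with hK
  have hK0 : 0 < K := by
    have := Real.sqrt_pos.2 (show 0 < 2 * Real.pi * u by positivity)
    positivity
  -- pointwise MVT bound
  have hpt : ∀ x : ℝ, |gaussDensity u x - gaussDensity v x|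
      ≤ K * (v - u) * Real.exp (-(x ^ 2) / (5 * v)) := by
    intro x
    have hmvt := Convex.norm_image_sub_le_of_norm_hasDerivWithin_le
      (f := fun s => gaussDensity s x)
      (f' := fun s => gaussDensity s x * ((x ^ 2 - s) / (2 * s ^ 2)))
      (s := Set.Icc u v)
      (C := K * Real.exp (-(x ^ 2) / (5 * v)))
      (fun s hs => (hasDerivAt_gaussDensity x s (lt_of_lt_of_le hu hs.1)).hasDerivWithinAt)
      (fun s hs => by
        rw [Real.norm_eq_abs]
        simpa [hK, mul_assoc] using deriv_bound x u v s hu hs.1 hs.2)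
      (convex_Icc u v)
      (Set.left_mem_Icc.2 huv.le) (Set.right_mem_Icc.2 huv.le)
    rw [Real.norm_eq_abs, Real.norm_eq_abs, abs_of_nonneg (by linarith : (0:ℝ) ≤ v - u)] at hmvt
    calc |gaussDensity u x - gaussDensity v x|
        = |gaussDensity v x - gaussDensity u x| := abs_sub_comm _ _
      _ ≤ K * Real.exp (-(x ^ 2) / (5 * v)) * (v - u) := hmvt
      _ = K * (v - u) * Real.exp (-(x ^ 2) / (5 * v)) := by ring
  -- integrability of the majorant
  have hfun : ∀ x : ℝ, K * (v - u) * Real.exp (-(1 / (5 * v)) * x ^ 2)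
      = K * (v - u) * Real.exp (-(x ^ 2) / (5 * v)) := by
    intro x; congr 1; ring
  have hint : Integrable (fun x : ℝ => K * (v - u) * Real.exp (-(x ^ 2) / (5 * v))) := by
    have h := (integrable_exp_neg_mul_sq (show 0 < 1 / (5 * v) by positivity)).const_mul
      (K * (v - u))
    exact h.congr (Filter.Eventually.of_forall fun x => hfun x)
  -- bound the integral
  have hle : (∫ x : ℝ, |gaussDensity u x - gaussDensity v x|)
      ≤ ∫ x : ℝ, K * (v - u) * Real.exp (-(x ^ 2) / (5 * v)) :=
    integral_mono_of_nonneg (Filter.Eventually.of_forall fun x => abs_nonneg _) hint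
      (Filter.Eventually.of_forall hpt)
  -- compute the integral of the majorant
  have hcomp : (∫ x : ℝ, K * (v - u) * Real.exp (-(x ^ 2) / (5 * v)))
      = K * (v - u) * Real.sqrt (Real.pi / (1 / (5 * v))) := by
    rw [show (fun x : ℝ => K * (v - u) * Real.exp (-(x ^ 2) / (5 * v)))
        = fun x : ℝ => K * (v - u) * Real.exp (-(1 / (5 * v)) * x ^ 2) from
        funext fun x => (hfun x).symm]
    rw [MeasureTheory.integral_const_mul, integral_gaussian]
  -- final arithmetic
  have harith : K * Real.sqrt (Real.pi / (1 / (5 * v))) ≤ Real.sqrt (2 / Real.pi) / u := by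
    have h2 : Real.sqrt (2 * Real.pi * u) ^ 2 = 2 * Real.pi * u :=
      Real.sq_sqrt (by positivity)
    have hsv2 : Real.sqrt (Real.pi / (1 / (5 * v))) ^ 2 = 5 * Real.pi * v := by
      rw [Real.sq_sqrt (by positivity)]; field_simp
    have hB2 : Real.sqrt (2 / Real.pi) ^ 2 = 2 / Real.pi :=
      Real.sq_sqrt (by positivity)
    have hsq : (K * Real.sqrt (Real.pi / (1 / (5 * v)))) ^ 2
        ≤ (Real.sqrt (2 / Real.pi) / u) ^ 2 := by
      have e1 : (K * Real.sqrt (Real.pi / (1 / (5 * v)))) ^ 2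
          = v ^ 2 * (5 * Real.pi * v) / ((2 * u ^ 2) ^ 2 * (2 * Real.pi * u)) := by
        rw [hK, mul_pow, mul_pow, inv_pow, mul_pow, h2, hsv2]; ring
      have e2 : (Real.sqrt (2 / Real.pi) / u) ^ 2 = (2 / Real.pi) / u ^ 2 := by
        rw [div_pow, hB2]
      rw [e1, e2, div_le_div_iff₀ (by positivity) (by positivity)]
      rw [div_mul_eq_mul_div, le_div_iff₀ Real.pi_pos]
      nlinarith [mul_le_mul_of_nonneg_right hc (by positivity : (0:ℝ) ≤ Real.pi * u ^ 2)]
    have hKnn : 0 ≤ K * Real.sqrt (Real.pi / (1 / (5 * v))) := by positivity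
    calc K * Real.sqrt (Real.pi / (1 / (5 * v)))
        = Real.sqrt ((K * Real.sqrt (Real.pi / (1 / (5 * v)))) ^ 2) :=
          (Real.sqrt_sq hKnn).symm
      _ ≤ Real.sqrt ((Real.sqrt (2 / Real.pi) / u) ^ 2) := Real.sqrt_le_sqrt hsq
      _ = Real.sqrt (2 / Real.pi) / u := Real.sqrt_sq (by positivity)
  calc (∫ x : ℝ, |gaussDensity u x - gaussDensity v x|)
      ≤ K * (v - u) * Real.sqrt (Real.pi / (1 / (5 * v))) := hcomp ▸ hle
    _ = (K * Real.sqrt (Real.pi / (1 / (5 * v)))) * (v - u) := by ring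
    _ ≤ (Real.sqrt (2 / Real.pi) / u) * (v - u) := by
        apply mul_le_mul_of_nonneg_right harith (by linarith)
    _ = Real.sqrt (2 / Real.pi) * ((v - u) / u) := by ring

lemma integrable_gaussDensity (s : ℝ) (hs : 0 < s) :
    Integrable (fun x => gaussDensity s x) := by
  have heq : (fun x => gaussDensity s x)
      = fun x => (Real.sqrt (2 * Real.pi * s))⁻¹ * Real.exp (-(1 / (2 * s)) * x ^ 2) := by
    funext x
    unfold gaussDensity
    congr 1
    ring
  rw [heq]
  exact (integrable_exp_neg_mul_sq (show 0 < 1 / (2 * s) by positivity)).const_mul _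

lemma main_aux : ∀ n : ℕ, ∀ u v : ℝ, 0 < u → u < v → v ≤ (201 / 200 : ℝ) ^ n * u →
    (∫ x : ℝ, |gaussDensity u x - gaussDensity v x|)
      ≤ Real.sqrt (2 / Real.pi) * ((v - u) / u) := by
  intro n
  induction n with
  | zero => intro u v hu huv hle; rw [pow_zero, one_mul] at hle; linarith
  | succ n ih =>
    intro u v hu huv hle
    by_cases hbc : 5 * Real.pi * v ^ 3 ≤ 16 * u ^ 3
    · exact base_case u v hu huv hbc
    · push_neg at hbc
      have hv : 0 < v := hu.trans huv
      set w : ℝ := v * (200 / 201) with hw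
      have hw0 : 0 < w := by positivity
      have hwv : w < v := by rw [hw]; nlinarith
      have h5pc : 5 * Real.pi * (201 / 200 : ℝ) ^ 3 ≤ 16 := by
        nlinarith [Real.pi_lt_d2]
      have hbase_wv : 5 * Real.pi * v ^ 3 ≤ 16 * w ^ 3 := by
        have hv3 : v ^ 3 = (201 / 200 : ℝ) ^ 3 * w ^ 3 := by rw [hw]; ring
        rw [hv3]
        nlinarith [pow_pos hw0 3]
      have huw : u < w := by
        by_contra h
        push_neg at h
        have : w ^ 3 ≤ u ^ 3 := pow_le_pow_left₀ hw0.le h 3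
        nlinarith
      have hwle : w ≤ (201 / 200 : ℝ) ^ n * u := by
        rw [hw]
        rw [pow_succ] at hle
        nlinarith [pow_pos (show (0:ℝ) < 201/200 by norm_num) n]
      have ih_uw := ih u w hu huw hwle
      have base_wv := base_case w v hw0 hwv hbase_wv
      -- triangle inequality
      have int_uw : Integrable (fun x => |gaussDensity u x - gaussDensity w x|) :=
        ((integrable_gaussDensity u hu).sub (integrable_gaussDensity w hw0)).abs
      have int_wv : Integrable (fun x => |gaussDensity w x - gaussDensity v x|) :=
        ((integrable_gaussDensity w hw0).sub (integrable_gaussDensity v hv)).abs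
      have htri : (∫ x : ℝ, |gaussDensity u x - gaussDensity v x|)
          ≤ (∫ x : ℝ, |gaussDensity u x - gaussDensity w x|)
            + ∫ x : ℝ, |gaussDensity w x - gaussDensity v x| := by
        rw [← integral_add int_uw int_wv]
        refine integral_mono_of_nonneg (Filter.Eventually.of_forall fun x => abs_nonneg _)
          (int_uw.add int_wv) (Filter.Eventually.of_forall fun x => ?_)
        exact abs_sub_le _ _ _
      have hsum : Real.sqrt (2 / Real.pi) * ((w - u) / u)
          + Real.sqrt (2 / Real.pi) * ((v - w) / w)
          ≤ Real.sqrt (2 / Real.pi) * ((v - u) / u) := by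
        rw [← mul_add]
        apply mul_le_mul_of_nonneg_left _ (Real.sqrt_nonneg _)
        have h1 : (v - w) / w ≤ (v - w) / u := by
          gcongr
        have h2 : (w - u) / u + (v - w) / u = (v - u) / u := by ring
        linarith
      linarith

/-- The total variation (L¹) distance between `N(0,u)` and `N(0,v)` is at most
`√(2/π) (v − u)/u` for `0 < u < v`. -/
theorem stmt14 (u v : ℝ) (hu : 0 < u) (huv : u < v) :
    (∫ x : ℝ, |gaussDensity u x - gaussDensity v x|)
      ≤ Real.sqrt (2 / Real.pi) * ((v - u) / u) := by
  obtain ⟨n, hn⟩ := pow_unbounded_of_one_lt (v / u) (show (1:ℝ) < 201 / 200 by norm_num)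
  refine main_aux n u v hu huv ?_
  rw [div_lt_iff₀ hu] at hn
  linarith
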